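/- arXiv:2411.05538 — 3 statements merged into one kernel-verified Lean document; each statement's English description precedes it below -/
import Mathlib

section
/- Let b : ℝ^d → ℝ^d be C² with ⟨Db(x)k,k⟩ ≤ -μ‖k‖² and ‖D²b(x)‖ ≤ M for all x. Let X solve X'=b(X), η_i (i=1,2) solve η_i' = Db(X)η_i with η_i(0)=k_i, and ζ solve ζ' = Db(X)ζ + D²b(X).(η₁,η₂) with ζ(0)=0. Then there is a constant C (depending only on μ, M) such that ‖ζ(t)‖ ≤ C e^{-μ t}‖k₁‖‖k₂‖ for all t ≥ 0. -/
private lemma svd_mono {f f' : ℝ → ℝ}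
    (hd : ∀ s, 0 ≤ s → HasDerivAt f (f' s) s)
    (h0 : ∀ s, 0 ≤ s → f' s ≤ 0) {t : ℝ} (ht : 0 ≤ t) : f t ≤ f 0 := by
  rcases eq_or_lt_of_le ht with h | h
  · rw [← h]
  · have hcont : ContinuousOn f (Set.Icc 0 t) := fun s hs =>
      ((hd s hs.1).continuousAt).continuousWithinAt
    have hdiff : DifferentiableOn ℝ f (interior (Set.Icc (0:ℝ) t)) := by
      rw [interior_Icc]
      exact fun s hs => ((hd s hs.1.le).differentiableAt).differentiableWithinAt
    have hderiv : ∀ s ∈ interior (Set.Icc (0:ℝ) t), deriv f s ≤ 0 := by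
      rw [interior_Icc]; intro s hs
      rw [(hd s hs.1.le).deriv]; exact h0 s hs.1.le
    exact antitoneOn_of_deriv_nonpos (convex_Icc 0 t) hcont hdiff hderiv
      (Set.left_mem_Icc.2 ht) (Set.right_mem_Icc.2 ht) ht

private lemma svd_eta_decay {d : ℕ} {μ : ℝ} (hμ : 0 < μ)
    {b : EuclideanSpace ℝ (Fin d) → EuclideanSpace ℝ (Fin d)}
    (hdiss : ∀ x k : EuclideanSpace ℝ (Fin d),
      (inner ℝ (fderiv ℝ b x k) k : ℝ) ≤ -μ * ‖k‖ ^ 2)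
    {X η : ℝ → EuclideanSpace ℝ (Fin d)}
    (hη : ∀ t : ℝ, 0 ≤ t → HasDerivAt η (fderiv ℝ b (X t) (η t)) t)
    {t : ℝ} (ht : 0 ≤ t) : ‖η t‖ ≤ Real.exp (-(μ * t)) * ‖η 0‖ := by
  set f : ℝ → ℝ := fun s => Real.exp (2 * μ * s) * (inner ℝ (η s) (η s) : ℝ) with hf
  set f' : ℝ → ℝ := fun s => Real.exp (2 * μ * s) * (2 * μ) * (inner ℝ (η s) (η s) : ℝ)
      + Real.exp (2 * μ * s) *
        ((inner ℝ (η s) (fderiv ℝ b (X s) (η s)) : ℝ)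
          + (inner ℝ (fderiv ℝ b (X s) (η s)) (η s) : ℝ)) with hf'
  have hd : ∀ s, 0 ≤ s → HasDerivAt f (f' s) s := by
    intro s hs
    have h1 : HasDerivAt (fun s => Real.exp (2 * μ * s)) (Real.exp (2 * μ * s) * (2 * μ)) s := by
      simpa using ((hasDerivAt_id s).const_mul (2 * μ)).exp
    have h2 : HasDerivAt (fun s => (inner ℝ (η s) (η s) : ℝ))
        ((inner ℝ (η s) (fderiv ℝ b (X s) (η s)) : ℝ)
          + (inner ℝ (fderiv ℝ b (X s) (η s)) (η s) : ℝ)) s :=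
      HasDerivAt.inner ℝ (hη s hs) (hη s hs)
    simpa [hf, hf', Pi.mul_def, mul_comm, mul_assoc, mul_left_comm, mul_add, add_comm] using h1.mul h2
  have h0 : ∀ s, 0 ≤ s → f' s ≤ 0 := by
    intro s hs
    have hdis := hdiss (X s) (η s)
    have hsym : (inner ℝ (η s) (fderiv ℝ b (X s) (η s)) : ℝ)
        = (inner ℝ (fderiv ℝ b (X s) (η s)) (η s) : ℝ) := real_inner_comm _ _
    have hns : (inner ℝ (η s) (η s) : ℝ) = ‖η s‖ ^ 2 := real_inner_self_eq_norm_sq _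
    have hep : (0:ℝ) < Real.exp (2 * μ * s) := Real.exp_pos _
    simp only [hf', hsym, hns]
    nlinarith [sq_nonneg (‖η s‖)]
  have key : f t ≤ f 0 := svd_mono hd h0 ht
  have hns : ∀ s, (inner ℝ (η s) (η s) : ℝ) = ‖η s‖ ^ 2 := fun s => real_inner_self_eq_norm_sq _
  have hsq : ‖η t‖ ^ 2 ≤ (Real.exp (-(μ * t)) * ‖η 0‖) ^ 2 := by
    have hept : (0:ℝ) < Real.exp (2 * μ * t) := Real.exp_pos _
    have h1 : Real.exp (2 * μ * t) * ‖η t‖ ^ 2 ≤ ‖η 0‖ ^ 2 := by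
      have := key
      simp only [hf, hns, mul_zero, Real.exp_zero, one_mul] at this
      exact this
    have h2 : Real.exp (-(μ * t)) ^ 2 * Real.exp (2 * μ * t) = 1 := by
      rw [sq, ← Real.exp_add, ← Real.exp_add,
        show -(μ * t) + -(μ * t) + 2 * μ * t = 0 by ring, Real.exp_zero]
    calc ‖η t‖ ^ 2 = Real.exp (-(μ * t)) ^ 2 * (Real.exp (2 * μ * t) * ‖η t‖ ^ 2) := by
          rw [← mul_assoc, h2, one_mul]
      _ ≤ Real.exp (-(μ * t)) ^ 2 * ‖η 0‖ ^ 2 := by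
          apply mul_le_mul_of_nonneg_left h1 (by positivity)
      _ = (Real.exp (-(μ * t)) * ‖η 0‖) ^ 2 := by ring
  have := Real.sqrt_le_sqrt hsq
  rwa [Real.sqrt_sq (norm_nonneg _), Real.sqrt_sq (by positivity)] at this

set_option maxHeartbeats 2000000 in
theorem second_variation_exponential_decay {d : ℕ} (μ M : ℝ) (hμ : 0 < μ) (hM : 0 ≤ M) :
    ∃ C : ℝ, 0 < C ∧
      ∀ (b : EuclideanSpace ℝ (Fin d) → EuclideanSpace ℝ (Fin d)),
        ContDiff ℝ 2 b →
        (∀ x k : EuclideanSpace ℝ (Fin d),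
          (inner ℝ (fderiv ℝ b x k) k : ℝ) ≤ -μ * ‖k‖ ^ 2) →
        (∀ x : EuclideanSpace ℝ (Fin d), ‖fderiv ℝ (fderiv ℝ b) x‖ ≤ M) →
        ∀ (X η₁ η₂ ζ : ℝ → EuclideanSpace ℝ (Fin d)) (k₁ k₂ : EuclideanSpace ℝ (Fin d)),
          (∀ t : ℝ, 0 ≤ t → HasDerivAt X (b (X t)) t) →
          (∀ t : ℝ, 0 ≤ t → HasDerivAt η₁ (fderiv ℝ b (X t) (η₁ t)) t) → η₁ 0 = k₁ →
          (∀ t : ℝ, 0 ≤ t → HasDerivAt η₂ (fderiv ℝ b (X t) (η₂ t)) t) → η₂ 0 = k₂ →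
          (∀ t : ℝ, 0 ≤ t → HasDerivAt ζ
            (fderiv ℝ b (X t) (ζ t) + fderiv ℝ (fderiv ℝ b) (X t) (η₁ t) (η₂ t)) t) →
          ζ 0 = 0 →
          ∀ t : ℝ, 0 ≤ t → ‖ζ t‖ ≤ C * Real.exp (-(μ * t)) * ‖k₁‖ * ‖k₂‖ := by
  refine ⟨M / μ + 1, by positivity, ?_⟩
  intro b hb hdiss hM2 X η₁ η₂ ζ k₁ k₂ hX hη₁ hη₁0 hη₂ hη₂0 hζ hζ0 t ht
  set A : ℝ := ‖k₁‖ * ‖k₂‖ with hA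
  have hAnn : 0 ≤ A := by positivity
  -- main estimate with ε-regularization
  have main : ∀ ε : ℝ, 0 < ε → ‖ζ t‖ ≤ (M * A / μ + ε) * Real.exp (-(μ * t)) := by
    intro ε hε
    set F : ℝ → EuclideanSpace ℝ (Fin d) := fun s =>
      fderiv ℝ b (X s) (ζ s) + fderiv ℝ (fderiv ℝ b) (X s) (η₁ s) (η₂ s) with hF
    set q : ℝ → ℝ := fun s => Real.exp (2 * μ * s) * (inner ℝ (ζ s) (ζ s) : ℝ) + ε ^ 2 with hq
    have hqpos : ∀ s, 0 < q s := by
      intro s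
      have h1 : (inner ℝ (ζ s) (ζ s) : ℝ) = ‖ζ s‖ ^ 2 := real_inner_self_eq_norm_sq _
      have := Real.exp_pos (2 * μ * s)
      simp only [hq, h1]
      nlinarith [sq_nonneg (‖ζ s‖), sq_nonneg ε, hε]
    set q' : ℝ → ℝ := fun s => Real.exp (2 * μ * s) * (2 * μ) * (inner ℝ (ζ s) (ζ s) : ℝ)
        + Real.exp (2 * μ * s) * ((inner ℝ (ζ s) (F s) : ℝ) + (inner ℝ (F s) (ζ s) : ℝ)) with hq'
    have hqd : ∀ s, 0 ≤ s → HasDerivAt q (q' s) s := by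
      intro s hs
      have h1 : HasDerivAt (fun s => Real.exp (2 * μ * s)) (Real.exp (2 * μ * s) * (2 * μ)) s := by
        simpa using ((hasDerivAt_id s).const_mul (2 * μ)).exp
      have h2 : HasDerivAt (fun s => (inner ℝ (ζ s) (ζ s) : ℝ))
          ((inner ℝ (ζ s) (F s) : ℝ) + (inner ℝ (F s) (ζ s) : ℝ)) s :=
        HasDerivAt.inner ℝ (hζ s hs) (hζ s hs)
      simpa [hq, hq', mul_comm, mul_assoc, mul_left_comm, mul_add, add_comm] using
        (h1.mul h2).add_const (ε ^ 2)
    set u : ℝ → ℝ := fun s => Real.sqrt (q s) with hu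
    have hupos : ∀ s, 0 < u s := fun s => Real.sqrt_pos.2 (hqpos s)
    set u' : ℝ → ℝ := fun s => 1 / (2 * Real.sqrt (q s)) * q' s with hu'
    have hud : ∀ s, 0 ≤ s → HasDerivAt u (u' s) s := by
      intro s hs
      exact (Real.hasDerivAt_sqrt (hqpos s).ne').comp s (hqd s hs)
    set w : ℝ → ℝ := fun s => u s - (M * A / μ) * (1 - Real.exp (-(μ * s))) with hw
    set w' : ℝ → ℝ := fun s => u' s - (M * A / μ) * (Real.exp (-(μ * s)) * μ) with hw'
    have hwd : ∀ s, 0 ≤ s → HasDerivAt w (w' s) s := by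
      intro s hs
      have h1 : HasDerivAt (fun s : ℝ => Real.exp (-(μ * s))) (Real.exp (-(μ * s)) * (-μ)) s := by
        simpa using (((hasDerivAt_id s).const_mul μ).neg).exp
      have h2 : HasDerivAt (fun s : ℝ => (M * A / μ) * (1 - Real.exp (-(μ * s))))
          ((M * A / μ) * (Real.exp (-(μ * s)) * μ)) s := by
        have := ((hasDerivAt_const s (1:ℝ)).sub h1).const_mul (M * A / μ)
        simpa [mul_comm, mul_assoc, mul_left_comm] using this
      exact (hud s hs).sub h2
    -- key derivative bound
    have hw0 : ∀ s, 0 ≤ s → w' s ≤ 0 := by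
      intro s hs
      have hE : (0:ℝ) < Real.exp (μ * s) := Real.exp_pos _
      have hE2 : Real.exp (2 * μ * s) = Real.exp (μ * s) * Real.exp (μ * s) := by
        rw [← Real.exp_add]; ring_nf
      have hEinv : Real.exp (-(μ * s)) = (Real.exp (μ * s))⁻¹ := by
        rw [← Real.exp_neg]
      set E := Real.exp (μ * s) with hEdef
      set Z := ‖ζ s‖ with hZ
      set Q := Real.sqrt (q s) with hQ
      have hQpos : 0 < Q := Real.sqrt_pos.2 (hqpos s)
      have hZQ : E * Z ≤ Q := by
        have h1 : (E * Z) ^ 2 ≤ q s := by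
          have hns : (inner ℝ (ζ s) (ζ s) : ℝ) = Z ^ 2 := real_inner_self_eq_norm_sq _
          simp only [hq, hns, hE2]
          nlinarith [sq_nonneg ε]
        have := Real.sqrt_le_sqrt h1
        rwa [Real.sqrt_sq (by positivity)] at this
      -- bounds on η
      have hη1b : ‖η₁ s‖ ≤ E⁻¹ * ‖k₁‖ := by
        have := svd_eta_decay hμ hdiss hη₁ hs
        rwa [hη₁0, hEinv] at this
      have hη2b : ‖η₂ s‖ ≤ E⁻¹ * ‖k₂‖ := by
        have := svd_eta_decay hμ hdiss hη₂ hs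
        rwa [hη₂0, hEinv] at this
      -- inner product bound
      have hFb : (inner ℝ (F s) (ζ s) : ℝ) ≤ -μ * Z ^ 2 + M * ‖η₁ s‖ * ‖η₂ s‖ * Z := by
        have h1 : (inner ℝ (F s) (ζ s) : ℝ)
            = (inner ℝ (fderiv ℝ b (X s) (ζ s)) (ζ s) : ℝ)
              + (inner ℝ (fderiv ℝ (fderiv ℝ b) (X s) (η₁ s) (η₂ s)) (ζ s) : ℝ) := by
          simp [hF, inner_add_left]
        have h2 := hdiss (X s) (ζ s)
        have h3 : (inner ℝ (fderiv ℝ (fderiv ℝ b) (X s) (η₁ s) (η₂ s)) (ζ s) : ℝ)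
            ≤ M * ‖η₁ s‖ * ‖η₂ s‖ * Z := by
          calc (inner ℝ (fderiv ℝ (fderiv ℝ b) (X s) (η₁ s) (η₂ s)) (ζ s) : ℝ)
              ≤ ‖fderiv ℝ (fderiv ℝ b) (X s) (η₁ s) (η₂ s)‖ * ‖ζ s‖ := real_inner_le_norm _ _
            _ ≤ ‖fderiv ℝ (fderiv ℝ b) (X s) (η₁ s)‖ * ‖η₂ s‖ * ‖ζ s‖ := by
                apply mul_le_mul_of_nonneg_right (ContinuousLinearMap.le_opNorm _ _)
                  (norm_nonneg _)
            _ ≤ ‖fderiv ℝ (fderiv ℝ b) (X s)‖ * ‖η₁ s‖ * ‖η₂ s‖ * ‖ζ s‖ := by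
                gcongr
                exact ContinuousLinearMap.le_opNorm _ _
            _ ≤ M * ‖η₁ s‖ * ‖η₂ s‖ * Z := by
                gcongr
                exact hM2 (X s)
        rw [h1]; linarith
      have hFb2 : (inner ℝ (F s) (ζ s) : ℝ) ≤ -μ * Z ^ 2 + M * A * E⁻¹ * E⁻¹ * Z := by
        have hZnn : 0 ≤ Z := norm_nonneg _
        have h4 : M * ‖η₁ s‖ * ‖η₂ s‖ * Z ≤ M * (E⁻¹ * ‖k₁‖) * (E⁻¹ * ‖k₂‖) * Z := by
          have h4a := mul_le_mul hη1b hη2b (norm_nonneg _) (by positivity)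
          have : 0 ≤ M * Z := by positivity
          calc M * ‖η₁ s‖ * ‖η₂ s‖ * Z = (M * Z) * (‖η₁ s‖ * ‖η₂ s‖) := by ring
            _ ≤ (M * Z) * ((E⁻¹ * ‖k₁‖) * (E⁻¹ * ‖k₂‖)) := by
                exact mul_le_mul_of_nonneg_left h4a this
            _ = M * (E⁻¹ * ‖k₁‖) * (E⁻¹ * ‖k₂‖) * Z := by ring
        have : M * (E⁻¹ * ‖k₁‖) * (E⁻¹ * ‖k₂‖) * Z = M * A * E⁻¹ * E⁻¹ * Z := by
          simp only [hA]; ring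
        linarith [hFb, h4, this.le, this.ge]
      -- q' bound
      have hsym : (inner ℝ (ζ s) (F s) : ℝ) = (inner ℝ (F s) (ζ s) : ℝ) := real_inner_comm _ _
      have hns : (inner ℝ (ζ s) (ζ s) : ℝ) = Z ^ 2 := real_inner_self_eq_norm_sq _
      have hZE : Z ≤ E⁻¹ * Q := by
        have h := mul_le_mul_of_nonneg_left hZQ (inv_pos.2 hE).le
        rwa [← mul_assoc, inv_mul_cancel₀ hE.ne', one_mul] at h
      have hq'b : q' s ≤ 2 * M * A * E⁻¹ * Q := by
        have hEE : E * E * (E⁻¹ * E⁻¹) = 1 := by field_simp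
        have h5 : q' s = E * E * (2 * μ * Z ^ 2) + E * E * (2 * (inner ℝ (F s) (ζ s) : ℝ)) := by
          simp only [hq', hsym, hns, hE2]; ring
        have h6 : (inner ℝ (F s) (ζ s) : ℝ) ≤ -μ * Z ^ 2 + M * A * E⁻¹ * E⁻¹ * (E⁻¹ * Q) := by
          have hMA : 0 ≤ M * A * E⁻¹ * E⁻¹ := by positivity
          nlinarith [hFb2, hZE]
        have hEpos := hE
        rw [h5]
        have h7 : E * E * (2 * (inner ℝ (F s) (ζ s) : ℝ))
            ≤ E * E * (2 * (-μ * Z ^ 2 + M * A * E⁻¹ * E⁻¹ * (E⁻¹ * Q))) := by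
          apply mul_le_mul_of_nonneg_left (by linarith) (by positivity)
        have h8 : E * E * (2 * μ * Z ^ 2)
            + E * E * (2 * (-μ * Z ^ 2 + M * A * E⁻¹ * E⁻¹ * (E⁻¹ * Q)))
            = (E * E * (E⁻¹ * E⁻¹)) * (2 * M * A * E⁻¹ * Q) := by ring
        rw [hEE, one_mul] at h8
        linarith
      -- conclude w' ≤ 0
      have hterm : (M * A / μ) * (Real.exp (-(μ * s)) * μ) = M * A * E⁻¹ := by
        rw [hEinv]; field_simp
      have hu'b : u' s ≤ M * A * E⁻¹ := by
        have : u' s = 1 / (2 * Q) * q' s := rfl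
        rw [this]
        calc 1 / (2 * Q) * q' s ≤ 1 / (2 * Q) * (2 * M * A * E⁻¹ * Q) := by
              apply mul_le_mul_of_nonneg_left hq'b (by positivity)
          _ = M * A * E⁻¹ := by field_simp
      simp only [hw', hterm]
      linarith
    -- apply monotonicity
    have hwkey : w t ≤ w 0 := svd_mono hwd hw0 ht
    have hw0v : w 0 = ε := by
      simp [hw, hu, hq, hζ0, Real.exp_zero, Real.sqrt_sq hε.le]
    have hub : u t ≤ M * A / μ + ε := by
      have h1 : (M * A / μ) * (1 - Real.exp (-(μ * t))) ≤ M * A / μ := by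
        have he : 0 ≤ Real.exp (-(μ * t)) := (Real.exp_pos _).le
        have he2 : Real.exp (-(μ * t)) ≤ 1 := by
          apply Real.exp_le_one_iff.2; nlinarith
        have : 0 ≤ M * A / μ := by positivity
        nlinarith
      have h2 : u t - (M * A / μ) * (1 - Real.exp (-(μ * t))) ≤ ε := by
        rw [← hw0v]; exact hwkey
      linarith
    -- extract norm bound
    have hE : (0:ℝ) < Real.exp (μ * t) := Real.exp_pos _
    have hZQ : Real.exp (μ * t) * ‖ζ t‖ ≤ u t := by
      have hns : (inner ℝ (ζ t) (ζ t) : ℝ) = ‖ζ t‖ ^ 2 := real_inner_self_eq_norm_sq _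
      have hE2 : Real.exp (2 * μ * t) = Real.exp (μ * t) * Real.exp (μ * t) := by
        rw [← Real.exp_add]; ring_nf
      have h1 : (Real.exp (μ * t) * ‖ζ t‖) ^ 2 ≤ q t := by
        simp only [hq, hns, hE2]; nlinarith [sq_nonneg ε]
      have := Real.sqrt_le_sqrt h1
      rwa [Real.sqrt_sq (by positivity)] at this
    have hEinv : Real.exp (-(μ * t)) = (Real.exp (μ * t))⁻¹ := Real.exp_neg _
    rw [hEinv]
    rw [← mul_le_mul_iff_right₀ hE]
    calc Real.exp (μ * t) * ‖ζ t‖ ≤ u t := hZQ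
      _ ≤ M * A / μ + ε := hub
      _ = Real.exp (μ * t) * ((M * A / μ + ε) * (Real.exp (μ * t))⁻¹) := by
          field_simp
  -- let ε → 0
  have hfinal : ‖ζ t‖ ≤ (M * A / μ) * Real.exp (-(μ * t)) := by
    apply le_of_forall_pos_le_add
    intro ε hε
    have h1 := main ε hε
    have he2 : Real.exp (-(μ * t)) ≤ 1 := Real.exp_le_one_iff.2 (by nlinarith)
    have he : 0 ≤ Real.exp (-(μ * t)) := (Real.exp_pos _).le
    nlinarith
  have he : 0 ≤ Real.exp (-(μ * t)) := (Real.exp_pos _).le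
  calc ‖ζ t‖ ≤ (M * A / μ) * Real.exp (-(μ * t)) := hfinal
    _ ≤ (M / μ + 1) * Real.exp (-(μ * t)) * ‖k₁‖ * ‖k₂‖ := by
        have h1 : M * A / μ = (M / μ) * ‖k₁‖ * ‖k₂‖ := by simp only [hA]; ring
        rw [h1]
        have h2 : (0:ℝ) ≤ (M / μ) := by positivity
        nlinarith [norm_nonneg k₁, norm_nonneg k₂]
end

section
/- Let F be C² and μ-strongly convex with minimizer x⋆, and bounded second derivative in the sense sup_x ‖∇²F(x)‖ < ∞. Let φ : ℝ^d → ℝ be C² with bounded second derivative, and define u⁰(t,x) = φ(X_x(t)) where X_x is the gradient-flow solution with X_x(0)=x. Then for all t ≥ 0, x, k ∈ ℝ^d, |Du⁰(t,x).k| ≤ (‖∇φ(x⋆)‖ + |||φ|||₂ ‖X_x(t) - x⋆‖) e^{-μt}‖k‖, where |||φ|||₂ = sup_x ‖∇²φ(x)‖. -/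
open Real Set InnerProductSpace

-- contraction lemma
theorem flow_contract {d : ℕ}
    (F : EuclideanSpace ℝ (Fin d) → ℝ) (μ : ℝ)
    (hconv : ∀ x₁ x₂ : EuclideanSpace ℝ (Fin d),
      μ * ‖x₂ - x₁‖ ^ 2 ≤ (inner ℝ (gradient F x₂ - gradient F x₁) (x₂ - x₁) : ℝ))
    (X : EuclideanSpace ℝ (Fin d) → ℝ → EuclideanSpace ℝ (Fin d))
    (hX0 : ∀ x, X x 0 = x)
    (hXode : ∀ x, ∀ t : ℝ, 0 ≤ t → HasDerivAt (X x) (-(gradient F (X x t))) t)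
    (t : ℝ) (ht : 0 ≤ t) (x y : EuclideanSpace ℝ (Fin d)) :
    ‖X x t - X y t‖ ≤ Real.exp (-(μ * t)) * ‖x - y‖ := by
  set Δ : ℝ → EuclideanSpace ℝ (Fin d) := fun s => X x s - X y s with hΔ
  set g : ℝ → ℝ := fun s => Real.exp (2 * μ * s) * (inner ℝ (Δ s) (Δ s) : ℝ) with hg
  have hDer : ∀ s ∈ Set.Ici (0:ℝ), HasDerivAt g
      (Real.exp (2 * μ * s) * (2 * μ) * (inner ℝ (Δ s) (Δ s) : ℝ)
        + Real.exp (2 * μ * s) *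
          ((inner ℝ (Δ s) (-(gradient F (X x s) - gradient F (X y s))) : ℝ)
            + (inner ℝ (-(gradient F (X x s) - gradient F (X y s))) (Δ s) : ℝ))) s := by
    intro s hs
    have hΔ' : HasDerivAt Δ (-(gradient F (X x s) - gradient F (X y s))) s := by
      have h := (hXode x s hs).sub (hXode y s hs)
      have e : -gradient F (X x s) - -gradient F (X y s)
          = -(gradient F (X x s) - gradient F (X y s)) := by abel
      rw [e] at h; exact h
    have hexp : HasDerivAt (fun s : ℝ => Real.exp (2 * μ * s))
        (Real.exp (2 * μ * s) * (2 * μ)) s := by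
      have h1 : HasDerivAt (fun s : ℝ => 2 * μ * s) (2 * μ) s := by
        simpa using (hasDerivAt_id s).const_mul (2 * μ)
      exact h1.exp
    have hinner : HasDerivAt (fun s => (inner ℝ (Δ s) (Δ s) : ℝ))
        ((inner ℝ (Δ s) (-(gradient F (X x s) - gradient F (X y s))) : ℝ)
          + (inner ℝ (-(gradient F (X x s) - gradient F (X y s))) (Δ s) : ℝ)) s :=
      hΔ'.inner ℝ hΔ'
    exact hexp.mul hinner
  have hanti : AntitoneOn g (Set.Ici (0:ℝ)) := by
    apply antitoneOn_of_deriv_nonpos (convex_Ici 0)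
    · intro s hs
      exact ((hDer s hs).continuousAt).continuousWithinAt
    · rw [interior_Ici]
      intro s hs
      exact ((hDer s (Set.mem_Ici.2 (le_of_lt (Set.mem_Ioi.1 hs)))).differentiableAt).differentiableWithinAt
    · rw [interior_Ici]
      intro s hs
      rw [(hDer s (Set.mem_Ici.2 (le_of_lt (Set.mem_Ioi.1 hs)))).deriv]
      have h1 : (inner ℝ (Δ s) (Δ s) : ℝ) = ‖Δ s‖ ^ 2 := real_inner_self_eq_norm_sq _
      have h2 : (inner ℝ (-(gradient F (X x s) - gradient F (X y s))) (Δ s) : ℝ)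
          ≤ -(μ * ‖Δ s‖ ^ 2) := by
        have := hconv (X y s) (X x s)
        rw [inner_neg_left]
        linarith
      have h3 : (inner ℝ (Δ s) (-(gradient F (X x s) - gradient F (X y s))) : ℝ)
          ≤ -(μ * ‖Δ s‖ ^ 2) := by
        rw [real_inner_comm]; exact h2
      have he : (0:ℝ) < Real.exp (2 * μ * s) := Real.exp_pos _
      have hA := mul_le_mul_of_nonneg_left h3 he.le
      have hB := mul_le_mul_of_nonneg_left h2 he.le
      rw [h1]
      nlinarith [hA, hB]
  have hkey := hanti (Set.self_mem_Ici) (Set.mem_Ici.2 ht) ht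
  have hΔ0 : Δ 0 = x - y := by rw [hΔ]; simp [hX0]
  have hg0 : g 0 = ‖x - y‖ ^ 2 := by
    have e : g 0 = Real.exp (2 * μ * 0) * (inner ℝ (Δ 0) (Δ 0) : ℝ) := rfl
    rw [e, hΔ0, real_inner_self_eq_norm_sq]
    simp
  have hgt : g t = Real.exp (2 * μ * t) * ‖Δ t‖ ^ 2 := by
    have e : g t = Real.exp (2 * μ * t) * (inner ℝ (Δ t) (Δ t) : ℝ) := rfl
    rw [e, real_inner_self_eq_norm_sq]
  rw [hg0, hgt] at hkey
  have hexp2 : Real.exp (-(μ * t)) ^ 2 * Real.exp (2 * μ * t) = 1 := by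
    rw [sq, ← Real.exp_add, ← Real.exp_add]
    have e : (-(μ * t)) + (-(μ * t)) + 2 * μ * t = 0 := by ring
    rw [e, Real.exp_zero]
  have hsq : ‖Δ t‖ ^ 2 ≤ (Real.exp (-(μ * t)) * ‖x - y‖) ^ 2 := by
    nlinarith [hkey, hexp2, sq_nonneg (Real.exp (-(μ * t)))]
  have h1 : (0:ℝ) ≤ ‖Δ t‖ := norm_nonneg _
  have h2 : (0:ℝ) ≤ Real.exp (-(μ * t)) * ‖x - y‖ :=
    mul_nonneg (Real.exp_pos _).le (norm_nonneg _)
  nlinarith [hsq, h1, h2]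



theorem kolmogorov_first_derivative_decay {d : ℕ}
    (F φ : EuclideanSpace ℝ (Fin d) → ℝ) (μ C2 : ℝ) (hμ : 0 < μ) (hC2 : 0 ≤ C2)
    (hF : ContDiff ℝ 2 F)
    (hFhess : ∃ K : ℝ, ∀ x : EuclideanSpace ℝ (Fin d), ‖fderiv ℝ (gradient F) x‖ ≤ K)
    (hconv : ∀ x₁ x₂ : EuclideanSpace ℝ (Fin d),
      μ * ‖x₂ - x₁‖ ^ 2 ≤ (inner ℝ (gradient F x₂ - gradient F x₁) (x₂ - x₁) : ℝ))
    (xs : EuclideanSpace ℝ (Fin d)) (hxs : gradient F xs = 0)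
    (hφ : ContDiff ℝ 2 φ)
    (hφ2 : ∀ y : EuclideanSpace ℝ (Fin d), ‖fderiv ℝ (gradient φ) y‖ ≤ C2)
    -- the gradient flow map: X x is the solution starting at x
    (X : EuclideanSpace ℝ (Fin d) → ℝ → EuclideanSpace ℝ (Fin d))
    (hX0 : ∀ x, X x 0 = x)
    (hXode : ∀ x, ∀ t : ℝ, 0 ≤ t → HasDerivAt (X x) (-(gradient F (X x t))) t)
    (hXdiff : ∀ t : ℝ, 0 ≤ t → Differentiable ℝ (fun y => X y t)) :
    ∀ t : ℝ, 0 ≤ t → ∀ x k : EuclideanSpace ℝ (Fin d),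
      |fderiv ℝ (fun y => φ (X y t)) x k|
        ≤ (‖gradient φ xs‖ + C2 * ‖X x t - xs‖) * Real.exp (-(μ * t)) * ‖k‖ := by
  intro t ht x k
  have hlip : LipschitzWith (Real.toNNReal (Real.exp (-(μ * t)))) (fun y => X y t) := by
    apply LipschitzWith.of_dist_le_mul
    intro a b
    rw [dist_eq_norm, dist_eq_norm]
    have h := flow_contract F μ hconv X hX0 hXode t ht a b
    rwa [Real.coe_toNNReal _ (Real.exp_pos _).le]
  have hXd := hXdiff t ht
  have hφd : Differentiable ℝ φ := hφ.differentiable (by norm_num)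
  have hcomp : fderiv ℝ (fun y => φ (X y t)) x
      = (fderiv ℝ φ (X x t)).comp (fderiv ℝ (fun y => X y t) x) :=
    fderiv_comp x (hφd _) (hXd x)
  have hgradrel : ∀ (y m : EuclideanSpace ℝ (Fin d)),
      fderiv ℝ φ y m = (inner ℝ (gradient φ y) m : ℝ) := by
    intro y m
    rw [← InnerProductSpace.toDual_apply_apply]
    unfold gradient
    rw [LinearIsometryEquiv.apply_symm_apply]
  have hgraddiff : Differentiable ℝ (gradient φ) := by
    have h1 : ContDiff ℝ 1 (fderiv ℝ φ) := hφ.fderiv_right (by norm_num)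
    have h2 : Differentiable ℝ (fderiv ℝ φ) := h1.differentiable one_ne_zero
    have e : gradient φ = fun y =>
        (InnerProductSpace.toDual ℝ (EuclideanSpace ℝ (Fin d))).symm (fderiv ℝ φ y) := rfl
    rw [e]
    exact ((InnerProductSpace.toDual ℝ
      (EuclideanSpace ℝ (Fin d))).symm.toContinuousLinearEquiv.differentiable).comp h2
  have hgradbound : ∀ y, ‖gradient φ y‖ ≤ ‖gradient φ xs‖ + C2 * ‖y - xs‖ := by
    intro y
    have hmv := convex_univ.norm_image_sub_le_of_norm_fderiv_le
      (fun z _ => hgraddiff z) (fun z _ => hφ2 z) (Set.mem_univ xs) (Set.mem_univ y)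
    have h0 : ‖gradient φ y‖ ≤ ‖gradient φ xs‖ + ‖gradient φ y - gradient φ xs‖ := by
      have := norm_add_le (gradient φ xs) (gradient φ y - gradient φ xs)
      simpa using this
    linarith
  have hflownorm : ‖fderiv ℝ (fun y => X y t) x‖ ≤ Real.exp (-(μ * t)) := by
    have h := norm_fderiv_le_of_lipschitz (x₀ := x) ℝ hlip
    rwa [Real.coe_toNNReal _ (Real.exp_pos _).le] at h
  rw [hcomp]
  rw [ContinuousLinearMap.comp_apply]
  rw [hgradrel]
  have hmle : ‖fderiv ℝ (fun y => X y t) x k‖ ≤ Real.exp (-(μ * t)) * ‖k‖ := by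
    calc ‖fderiv ℝ (fun y => X y t) x k‖
        ≤ ‖fderiv ℝ (fun y => X y t) x‖ * ‖k‖ := (fderiv ℝ (fun y => X y t) x).le_opNorm k
      _ ≤ Real.exp (-(μ * t)) * ‖k‖ := mul_le_mul_of_nonneg_right hflownorm (norm_nonneg k)
  calc |(inner ℝ (gradient φ (X x t)) (fderiv ℝ (fun y => X y t) x k) : ℝ)|
      ≤ ‖gradient φ (X x t)‖ * ‖fderiv ℝ (fun y => X y t) x k‖ := abs_real_inner_le_norm _ _
    _ ≤ (‖gradient φ xs‖ + C2 * ‖X x t - xs‖) * (Real.exp (-(μ * t)) * ‖k‖) :=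
        mul_le_mul (hgradbound _) hmle (norm_nonneg _)
          (add_nonneg (norm_nonneg _) (mul_nonneg hC2 (norm_nonneg _)))
    _ = (‖gradient φ xs‖ + C2 * ‖X x t - xs‖) * Real.exp (-(μ * t)) * ‖k‖ := by ring
end

section
/- Let F : ℝ^d → ℝ be C³ of the form F(x) = ‖x‖² + εG(x) where G has bounded derivatives of all orders up to 3, and suppose inf_x D³G(x).(x,k,k) ≥ -c_F‖k‖² for all k. Then there exist h₀ > 0 and μ > 0 such that for all h ∈ (0,h₀) the modified objective F^h = F + (h/4)‖∇F‖² is μ-strongly convex, provided ε is sufficiently small. -/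
open InnerProductSpace ContinuousLinearMap

variable {E : Type*} [NormedAddCommGroup E] [InnerProductSpace ℝ E] [CompleteSpace E]

local notation "⟪" x ", " y "⟫" => @inner ℝ _ _ x y

noncomputable instance instNACG2 {F : Type*} [NormedAddCommGroup F] [NormedSpace ℝ F] :
    NormedAddCommGroup (F →L[ℝ] F →L[ℝ] ℝ) := inferInstance

noncomputable instance instNS2 {F : Type*} [NormedAddCommGroup F] [NormedSpace ℝ F] :
    NormedSpace ℝ (F →L[ℝ] F →L[ℝ] ℝ) := inferInstance

lemma itfd3_apply (f : E → ℝ) (z a b c : E) :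
    iteratedFDeriv ℝ 3 f z ![a, b, c] =
      fderiv ℝ (fderiv ℝ (fderiv ℝ f)) z a b c := by
  rw [iteratedFDeriv_succ_apply_right, iteratedFDeriv_two_apply]
  congr

noncomputable def tds : (E →L[ℝ] ℝ) → E := (toDual ℝ E).symm

noncomputable def TD : (E →L[ℝ] ℝ) →L[ℝ] E :=
  (toDual ℝ E).symm.toContinuousLinearEquiv.toContinuousLinearMap

lemma TD_apply (ℓ : E →L[ℝ] ℝ) : (TD ℓ : E) = tds ℓ := rfl

lemma inner_tds (ℓ : E →L[ℝ] ℝ) (m : E) : ⟪(tds ℓ : E), m⟫ = ℓ m :=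
  toDual_symm_apply

lemma inner_tds' (ℓ : E →L[ℝ] ℝ) (m : E) : ⟪m, (tds ℓ : E)⟫ = ℓ m := by
  rw [real_inner_comm]; exact toDual_symm_apply

lemma tds_comm (ℓ ℓ' : E →L[ℝ] ℝ) : ℓ (tds ℓ') = ℓ' (tds ℓ) := by
  rw [← inner_tds ℓ' (tds ℓ), real_inner_comm, inner_tds]

lemma norm_tds (ℓ : E →L[ℝ] ℝ) : ‖(tds ℓ : E)‖ = ‖ℓ‖ :=
  LinearIsometryEquiv.norm_map _ ℓ

section Key

lemma grad_inner_eq (ε : ℝ) (G : E → ℝ) (hG : ContDiff ℝ 3 G) (x : E) :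
    gradient (fun y => ‖y‖ ^ 2 + ε * G y) x
      = (2 : ℝ) • x + ε • tds (fderiv ℝ G x) := by
  have hGd : HasFDerivAt G (fderiv ℝ G x) x :=
    (hG.differentiable (by norm_num) x).hasFDerivAt
  have h1 : HasFDerivAt (fun y : E => ‖y‖ ^ 2 + ε * G y)
      (((fderivInnerCLM ℝ (x, x)).comp ((ContinuousLinearMap.id ℝ E).prod
        (ContinuousLinearMap.id ℝ E))) + ε • fderiv ℝ G x) x := by
    have h2 : HasFDerivAt (fun y : E => (⟪y, y⟫ : ℝ))
        ((fderivInnerCLM ℝ (x, x)).comp ((ContinuousLinearMap.id ℝ E).prod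
          (ContinuousLinearMap.id ℝ E))) x := (hasFDerivAt_id x).inner ℝ (hasFDerivAt_id x)
    have h3 : HasFDerivAt (fun y : E => ε * G y) (ε • fderiv ℝ G x) x := hGd.const_mul ε
    have := h2.add h3
    simpa [real_inner_self_eq_norm_sq, Pi.add_def] using this
  have h4 : HasGradientAt (fun y : E => ‖y‖ ^ 2 + ε * G y)
      ((2 : ℝ) • x + ε • tds (fderiv ℝ G x)) x := by
    rw [hasGradientAt_iff_hasFDerivAt]
    refine h1.congr_fderiv ?_
    ext m
    simp [tds, inner_add_left, inner_smul_left, real_inner_smul_left, toDual_symm_apply,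
      fderivInnerCLM_apply, real_inner_comm x m]
    ring
  exact h4.gradient


variable (G : E → ℝ) (ε h : ℝ)

noncomputable def pmap : E → E := fun y => (2 : ℝ) • y + ε • tds (fderiv ℝ G y)

noncomputable def qvec (k : E) : E → E :=
  fun y => (2 : ℝ) • k + ε • tds (fderiv ℝ (fderiv ℝ G) y k)

noncomputable def Afun (k : E) : E → ℝ := fun y =>
  2 * ⟪y, k⟫ + ε * fderiv ℝ G y k + h / 2 * ⟪qvec G ε k y, pmap G ε y⟫

lemma hasFDerivAt_pmap (hG : ContDiff ℝ 3 G) (y : E) :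
    HasFDerivAt (pmap G ε)
      ((2 : ℝ) • ContinuousLinearMap.id ℝ E
        + ε • (TD.comp (fderiv ℝ (fderiv ℝ G) y))) y := by
  have hg1 : ContDiff ℝ 2 (fderiv ℝ G) := hG.fderiv_right (by norm_num)
  have hg1d : HasFDerivAt (fderiv ℝ G) (fderiv ℝ (fderiv ℝ G) y) y :=
    (hg1.differentiable (by norm_num) y).hasFDerivAt
  have h1 : HasFDerivAt (fun z : E => tds (fderiv ℝ G z) : E → E)
      (TD.comp (fderiv ℝ (fderiv ℝ G) y)) y := TD.hasFDerivAt.comp y hg1d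
  exact ((hasFDerivAt_id y).const_smul (2:ℝ)).add (h1.const_smul ε)

end Key

section Key2

variable (G : E → ℝ) (ε h : ℝ)

lemma hasDerivAt_psi (hG : ContDiff ℝ 3 G) (x₁ k : E) (t : ℝ) :
    HasDerivAt (fun s : ℝ => Afun G ε h k (x₁ + s • k))
      (2 * ⟪k, k⟫ + ε * fderiv ℝ (fderiv ℝ G) (x₁ + t • k) k k
        + h / 2 * (⟪qvec G ε k (x₁ + t • k), qvec G ε k (x₁ + t • k)⟫
          + ε * fderiv ℝ (fderiv ℝ (fderiv ℝ G)) (x₁ + t • k) k k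
              (pmap G ε (x₁ + t • k)))) t := by
  set y := x₁ + t • k with hy
  have hg1 : ContDiff ℝ 2 (fderiv ℝ G) := hG.fderiv_right (by norm_num)
  have hg2 : ContDiff ℝ 1 (fderiv ℝ (fderiv ℝ G)) := hg1.fderiv_right (by norm_num)
  have hg1d : HasFDerivAt (fderiv ℝ G) (fderiv ℝ (fderiv ℝ G) y) y :=
    (hg1.differentiable (by norm_num) y).hasFDerivAt
  have hg2d : HasFDerivAt (fderiv ℝ (fderiv ℝ G))
      (fderiv ℝ (fderiv ℝ (fderiv ℝ G)) y) y :=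
    (hg2.differentiable (by norm_num) y).hasFDerivAt
  have hline : HasDerivAt (fun s : ℝ => x₁ + s • k) k t := by
    simpa using ((hasDerivAt_id t).smul_const k).const_add x₁
  have h1 : HasFDerivAt (fun z : E => 2 * ⟪z, k⟫)
      ((2 : ℝ) • ((fderivInnerCLM ℝ ((y : E), k)).comp
        ((ContinuousLinearMap.id ℝ E).prod (0 : E →L[ℝ] E)))) y :=
    ((hasFDerivAt_id y).inner ℝ (hasFDerivAt_const k y)).const_mul 2
  have h2 : HasFDerivAt (fun z : E => ε * fderiv ℝ G z k)
      (ε • ((ContinuousLinearMap.apply ℝ ℝ k).comp (fderiv ℝ (fderiv ℝ G) y))) y :=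
    ((ContinuousLinearMap.apply ℝ ℝ k).hasFDerivAt.comp y hg1d).const_mul ε
  have hq : HasFDerivAt (qvec G ε k)
      (ε • (TD.comp ((ContinuousLinearMap.apply ℝ (E →L[ℝ] ℝ) k).comp
        (fderiv ℝ (fderiv ℝ (fderiv ℝ G)) y)))) y := by
    have := (TD.hasFDerivAt.comp y
      ((ContinuousLinearMap.apply ℝ (E →L[ℝ] ℝ) k).hasFDerivAt.comp y hg2d)).const_smul ε
    exact this.const_add ((2 : ℝ) • k)
  have hp := hasFDerivAt_pmap G ε hG y
  have h3 := (hq.inner ℝ hp).const_mul (h / 2)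
  have hA : HasFDerivAt (Afun G ε h k) _ y := (h1.add h2).add h3
  have := hA.comp_hasDerivAt t hline
  refine this.congr_deriv ?_
  simp [fderivInnerCLM_apply, TD_apply, inner_tds, inner_smul_left, qvec,
    inner_add_left, inner_smul_right, real_inner_smul_left]
end Key2

section Key3
variable (G : E → ℝ) (ε h : ℝ)

lemma inner_grad_phi (hG : ContDiff ℝ 3 G) (y k : E) :
    ⟪gradient (fun x : E => (‖x‖ ^ 2 + ε * G x) + h / 4 * ‖pmap G ε x‖ ^ 2) y, k⟫
      = Afun G ε h k y := by
  have hg1 : ContDiff ℝ 2 (fderiv ℝ G) := hG.fderiv_right (by norm_num)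
  have hGd : HasFDerivAt G (fderiv ℝ G y) y :=
    (hG.differentiable (by norm_num) y).hasFDerivAt
  have hp := hasFDerivAt_pmap G ε hG y
  have h1 : HasFDerivAt (fun x : E => ‖x‖ ^ 2 + ε * G x)
      (((fderivInnerCLM ℝ ((y : E), y)).comp ((ContinuousLinearMap.id ℝ E).prod
        (ContinuousLinearMap.id ℝ E))) + ε • fderiv ℝ G y) y := by
    have h2 : HasFDerivAt (fun x : E => (⟪x, x⟫ : ℝ))
        ((fderivInnerCLM ℝ ((y : E), y)).comp ((ContinuousLinearMap.id ℝ E).prod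
          (ContinuousLinearMap.id ℝ E))) y := (hasFDerivAt_id y).inner ℝ (hasFDerivAt_id y)
    simpa [real_inner_self_eq_norm_sq, Pi.add_def] using h2.add (hGd.const_mul ε)
  set pd : E →L[ℝ] E := (2 : ℝ) • ContinuousLinearMap.id ℝ E
      + ε • (TD.comp (fderiv ℝ (fderiv ℝ G) y)) with hpd
  have h2 : HasFDerivAt (fun x : E => h / 4 * ‖pmap G ε x‖ ^ 2)
      ((h / 4) • ((fderivInnerCLM ℝ (pmap G ε y, pmap G ε y)).comp (pd.prod pd))) y := by
    have h3 : HasFDerivAt (fun x : E => (⟪pmap G ε x, pmap G ε x⟫ : ℝ))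
        ((fderivInnerCLM ℝ (pmap G ε y, pmap G ε y)).comp (pd.prod pd)) y := hp.inner ℝ hp
    have h4 := h3.const_mul (h / 4)
    have : (fun x : E => h / 4 * (⟪pmap G ε x, pmap G ε x⟫ : ℝ))
        = fun x : E => h / 4 * ‖pmap G ε x‖ ^ 2 := by
      funext x; rw [real_inner_self_eq_norm_sq]
    rwa [this] at h4
  have hphi := h1.add h2
  have hfd := hphi.fderiv
  show ⟪(toDual ℝ E).symm (fderiv ℝ ((fun x : E => ‖x‖ ^ 2 + ε * G x) + fun x : E => h / 4 * ‖pmap G ε x‖ ^ 2) y), k⟫ = _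
  rw [hfd]
  rw [toDual_symm_apply]
  simp [Afun, fderivInnerCLM_apply, TD_apply, inner_tds, inner_tds', qvec, hpd,
    inner_add_left, inner_add_right, inner_smul_left, inner_smul_right, pmap,
    ContinuousLinearMap.add_apply, ContinuousLinearMap.smul_apply, map_add, map_smul,
    real_inner_comm y k]
  rw [tds_comm (fderiv ℝ (fderiv ℝ G) y k) (fderiv ℝ G y)]
  ring
end Key3

section Sym
variable (G : E → ℝ)

lemma g3_sym12 (hG : ContDiff ℝ 3 G) (y a b : E) :
    fderiv ℝ (fderiv ℝ (fderiv ℝ G)) y a b = fderiv ℝ (fderiv ℝ (fderiv ℝ G)) y b a := by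
  have hg1 : ContDiff ℝ 2 (fderiv ℝ G) := hG.fderiv_right (by norm_num)
  have hg2 : ContDiff ℝ 1 (fderiv ℝ (fderiv ℝ G)) := hg1.fderiv_right (by norm_num)
  exact second_derivative_symmetric
    (fun z => (hg1.differentiable (by norm_num) z).hasFDerivAt)
    ((hg2.differentiable (by norm_num) y).hasFDerivAt) a b

lemma g2_sym (hG : ContDiff ℝ 3 G) (y a b : E) :
    fderiv ℝ (fderiv ℝ G) y a b = fderiv ℝ (fderiv ℝ G) y b a := by
  have hg1 : ContDiff ℝ 2 (fderiv ℝ G) := hG.fderiv_right (by norm_num)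
  exact second_derivative_symmetric
    (fun z => (hG.differentiable (by norm_num) z).hasFDerivAt)
    ((hg1.differentiable (by norm_num) y).hasFDerivAt) a b

lemma g3_sym23 (hG : ContDiff ℝ 3 G) (y a b c : E) :
    fderiv ℝ (fderiv ℝ (fderiv ℝ G)) y a b c = fderiv ℝ (fderiv ℝ (fderiv ℝ G)) y a c b := by
  have hg1 : ContDiff ℝ 2 (fderiv ℝ G) := hG.fderiv_right (by norm_num)
  have hg2 : ContDiff ℝ 1 (fderiv ℝ (fderiv ℝ G)) := hg1.fderiv_right (by norm_num)
  have hg2d : ∀ z : E, HasFDerivAt (fderiv ℝ (fderiv ℝ G))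
      (fderiv ℝ (fderiv ℝ (fderiv ℝ G)) z) z :=
    fun z => (hg2.differentiable (by norm_num) z).hasFDerivAt
  set L₁ : (E →L[ℝ] (E →L[ℝ] ℝ)) →L[ℝ] ℝ :=
    (ContinuousLinearMap.apply ℝ ℝ c).comp (ContinuousLinearMap.apply ℝ (E →L[ℝ] ℝ) b)
  set L₂ : (E →L[ℝ] (E →L[ℝ] ℝ)) →L[ℝ] ℝ :=
    (ContinuousLinearMap.apply ℝ ℝ b).comp (ContinuousLinearMap.apply ℝ (E →L[ℝ] ℝ) c)
  have h1 : HasFDerivAt (fun z : E => fderiv ℝ (fderiv ℝ G) z b c)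
      (L₁.comp (fderiv ℝ (fderiv ℝ (fderiv ℝ G)) y)) y := by
    simpa [L₁, Function.comp_def] using L₁.hasFDerivAt.comp y (hg2d y)
  have h2 : HasFDerivAt (fun z : E => fderiv ℝ (fderiv ℝ G) z c b)
      (L₂.comp (fderiv ℝ (fderiv ℝ (fderiv ℝ G)) y)) y := by
    simpa [L₂, Function.comp_def] using L₂.hasFDerivAt.comp y (hg2d y)
  have heq : (fun z : E => fderiv ℝ (fderiv ℝ G) z b c)
      = fun z : E => fderiv ℝ (fderiv ℝ G) z c b := by
    funext z; exact g2_sym G hG z b c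
  rw [heq] at h1
  have := h1.unique h2
  have := congrFun (congrArg DFunLike.coe this) a
  simpa [L₁, L₂] using this

lemma g3_swap_ends (hG : ContDiff ℝ 3 G) (y k w : E) :
    fderiv ℝ (fderiv ℝ (fderiv ℝ G)) y k k w = fderiv ℝ (fderiv ℝ (fderiv ℝ G)) y w k k := by
  rw [g3_sym23 G hG y k k w]
  rw [g3_sym12 G hG y k w]
end Sym

section KeyMain
variable (G : E → ℝ)

set_option maxHeartbeats 2000000 in
lemma key_ineq (cF M ε h : ℝ) (hcF : 0 < cF) (hM : 0 ≤ M) (hG : ContDiff ℝ 3 G)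
    (hb1 : ∀ x : E, ‖fderiv ℝ G x‖ ≤ M)
    (hb2 : ∀ x : E, ‖fderiv ℝ (fderiv ℝ G) x‖ ≤ M)
    (hb3 : ∀ x : E, ‖fderiv ℝ (fderiv ℝ (fderiv ℝ G)) x‖ ≤ M)
    (hG3 : ∀ x k : E, -cF * ‖k‖ ^ 2 ≤ fderiv ℝ (fderiv ℝ (fderiv ℝ G)) x x k k)
    (hε : 0 < ε) (hεM : ε * M ≤ 1) (hh : 0 < h)
    (hhc : h * (ε * (2 * cF + ε * M ^ 2)) ≤ 1) (x₁ x₂ : E) :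
    1 / 2 * ‖x₂ - x₁‖ ^ 2 ≤
      ⟪gradient (fun x => (‖x‖ ^ 2 + ε * G x)
          + h / 4 * ‖gradient (fun y => ‖y‖ ^ 2 + ε * G y) x‖ ^ 2) x₂
        - gradient (fun x => (‖x‖ ^ 2 + ε * G x)
          + h / 4 * ‖gradient (fun y => ‖y‖ ^ 2 + ε * G y) x‖ ^ 2) x₁, x₂ - x₁⟫ := by
  set k : E := x₂ - x₁ with hk
  have hfun : (fun x : E => (‖x‖ ^ 2 + ε * G x)
        + h / 4 * ‖gradient (fun y => ‖y‖ ^ 2 + ε * G y) x‖ ^ 2)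
      = fun x : E => (‖x‖ ^ 2 + ε * G x) + h / 4 * ‖pmap G ε x‖ ^ 2 := by
    funext x
    rw [grad_inner_eq ε G hG x]
    rfl
  rw [hfun, inner_sub_left, inner_grad_phi G ε h hG x₂ k, inner_grad_phi G ε h hG x₁ k]
  -- mean value theorem
  set ψ : ℝ → ℝ := fun s => Afun G ε h k (x₁ + s • k) with hψ
  set ψd : ℝ → ℝ := fun t =>
      2 * ⟪k, k⟫ + ε * fderiv ℝ (fderiv ℝ G) (x₁ + t • k) k k
        + h / 2 * (⟪qvec G ε k (x₁ + t • k), qvec G ε k (x₁ + t • k)⟫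
          + ε * fderiv ℝ (fderiv ℝ (fderiv ℝ G)) (x₁ + t • k) k k
              (pmap G ε (x₁ + t • k))) with hψd
  have hD : ∀ t : ℝ, HasDerivAt ψ (ψd t) t := fun t => hasDerivAt_psi G ε h hG x₁ k t
  obtain ⟨c, _, hc⟩ := exists_hasDerivAt_eq_slope ψ ψd one_pos
    (fun t _ => (hD t).continuousAt.continuousWithinAt) (fun t _ => hD t)
  have h10 : Afun G ε h k x₂ - Afun G ε h k x₁ = ψd c := by
    rw [hc]
    have e1 : x₁ + (1 : ℝ) • k = x₂ := by rw [one_smul, hk]; abel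
    have e0 : x₁ + (0 : ℝ) • k = x₁ := by rw [zero_smul, add_zero]
    simp only [hψ, e1, e0]
    ring
  rw [h10]
  -- now bound ψd c from below
  set y : E := x₁ + c • k with hy
  set a2 : ℝ := fderiv ℝ (fderiv ℝ G) y k k with ha2
  set a3 : ℝ := fderiv ℝ (fderiv ℝ (fderiv ℝ G)) y k k (pmap G ε y) with ha3
  have hB : (0:ℝ) ≤ ‖k‖ ^ 2 := by positivity
  have hQ : (0:ℝ) ≤ ⟪qvec G ε k y, qvec G ε k y⟫ := real_inner_self_nonneg
  have hkk : ⟪k, k⟫ = ‖k‖ ^ 2 := real_inner_self_eq_norm_sq k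
  have e2 : -(M * ‖k‖ ^ 2) ≤ a2 := by
    have h1 : ‖fderiv ℝ (fderiv ℝ G) y k k‖ ≤ M * ‖k‖ ^ 2 := by
      calc ‖fderiv ℝ (fderiv ℝ G) y k k‖
          ≤ ‖fderiv ℝ (fderiv ℝ G) y k‖ * ‖k‖ := ContinuousLinearMap.le_opNorm _ k
        _ ≤ (‖fderiv ℝ (fderiv ℝ G) y‖ * ‖k‖) * ‖k‖ := by
            gcongr; exact ContinuousLinearMap.le_opNorm _ k
        _ ≤ (M * ‖k‖) * ‖k‖ := by gcongr; exact hb2 y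
        _ = M * ‖k‖ ^ 2 := by ring
    have := abs_le.mp (show |a2| ≤ M * ‖k‖ ^ 2 by rw [← Real.norm_eq_abs]; exact h1)
    linarith [this.1]
  have e3 : -(2 * cF * ‖k‖ ^ 2) - ε * (M * M * ‖k‖ ^ 2) ≤ a3 := by
    have hsplit : a3 = 2 * fderiv ℝ (fderiv ℝ (fderiv ℝ G)) y k k y
        + ε * fderiv ℝ (fderiv ℝ (fderiv ℝ G)) y k k (tds (fderiv ℝ G y)) := by
      rw [ha3]
      show (fderiv ℝ (fderiv ℝ (fderiv ℝ G)) y k k) ((2:ℝ) • y + ε • tds (fderiv ℝ G y)) = _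
      rw [map_add, map_smul, map_smul]
      simp
    have hterm1 : -cF * ‖k‖ ^ 2 ≤ fderiv ℝ (fderiv ℝ (fderiv ℝ G)) y k k y := by
      rw [g3_swap_ends G hG y k y]
      exact hG3 y k
    have hterm2 : ‖fderiv ℝ (fderiv ℝ (fderiv ℝ G)) y k k (tds (fderiv ℝ G y))‖
        ≤ M * M * ‖k‖ ^ 2 := by
      calc ‖fderiv ℝ (fderiv ℝ (fderiv ℝ G)) y k k (tds (fderiv ℝ G y))‖
          ≤ ‖fderiv ℝ (fderiv ℝ (fderiv ℝ G)) y k k‖ * ‖(tds (fderiv ℝ G y) : E)‖ :=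
            ContinuousLinearMap.le_opNorm _ _
        _ ≤ (‖fderiv ℝ (fderiv ℝ (fderiv ℝ G)) y k‖ * ‖k‖) * ‖(tds (fderiv ℝ G y) : E)‖ := by
            gcongr; exact ContinuousLinearMap.le_opNorm _ k
        _ ≤ ((‖fderiv ℝ (fderiv ℝ (fderiv ℝ G)) y‖ * ‖k‖) * ‖k‖) * ‖(tds (fderiv ℝ G y) : E)‖ := by
            gcongr; exact ContinuousLinearMap.le_opNorm _ k
        _ ≤ ((M * ‖k‖) * ‖k‖) * M := by
            gcongr
            · exact hb3 y
            · rw [norm_tds]; exact hb1 y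
        _ = M * M * ‖k‖ ^ 2 := by ring
    have h2 := (abs_le.mp (show |fderiv ℝ (fderiv ℝ (fderiv ℝ G)) y k k (tds (fderiv ℝ G y))| ≤ M * M * ‖k‖ ^ 2 by
      rw [← Real.norm_eq_abs]; exact hterm2)).1
    have h3 := mul_le_mul_of_nonneg_left hterm1 (by norm_num : (0:ℝ) ≤ 2)
    have h4 := mul_le_mul_of_nonneg_left h2 hε.le
    rw [hsplit]
    nlinarith
  -- final arithmetic
  have f1 : -(‖k‖ ^ 2) ≤ ε * a2 := by
    have := mul_le_mul_of_nonneg_left e2 hε.le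
    have h5 : ε * M * ‖k‖ ^ 2 ≤ 1 * ‖k‖ ^ 2 :=
      mul_le_mul_of_nonneg_right hεM hB
    nlinarith
  have f2 : -(1 / 2 * ‖k‖ ^ 2) ≤ h / 2 * (⟪qvec G ε k y, qvec G ε k y⟫ + ε * a3) := by
    have h6 : -(ε * (2 * cF + ε * M ^ 2) * ‖k‖ ^ 2) ≤ ε * a3 := by
      have := mul_le_mul_of_nonneg_left e3 hε.le
      nlinarith
    have h7 : -(ε * (2 * cF + ε * M ^ 2) * ‖k‖ ^ 2)
        ≤ ⟪qvec G ε k y, qvec G ε k y⟫ + ε * a3 := by linarith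
    have h8 := mul_le_mul_of_nonneg_left h7 (by positivity : (0:ℝ) ≤ h / 2)
    have h9 : h * (ε * (2 * cF + ε * M ^ 2)) * ‖k‖ ^ 2 ≤ 1 * ‖k‖ ^ 2 :=
      mul_le_mul_of_nonneg_right hhc hB
    nlinarith
  have : ψd c = 2 * ⟪k, k⟫ + ε * a2
      + h / 2 * (⟪qvec G ε k y, qvec G ε k y⟫ + ε * a3) := rfl
  rw [this, hkk]
  linarith
end KeyMain

theorem modified_objective_uniformly_strongly_convex {d : ℕ}
    (G : EuclideanSpace ℝ (Fin d) → ℝ) (cF : ℝ) (hcF : 0 < cF)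
    (hG : ContDiff ℝ 3 G)
    (hGbdd : ∃ M : ℝ, ∀ i : ℕ, 1 ≤ i → i ≤ 3 →
      ∀ x : EuclideanSpace ℝ (Fin d), ‖iteratedFDeriv ℝ i G x‖ ≤ M)
    (hG3 : ∀ x k : EuclideanSpace ℝ (Fin d),
      -cF * ‖k‖ ^ 2 ≤ iteratedFDeriv ℝ 3 G x ![x, k, k]) :
    ∃ ε₀ : ℝ, 0 < ε₀ ∧ ∀ ε : ℝ, 0 < ε → ε < ε₀ →
      ∃ h₀ : ℝ, 0 < h₀ ∧ ∃ μ : ℝ, 0 < μ ∧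
        ∀ h : ℝ, 0 < h → h < h₀ →
          ∀ x₁ x₂ : EuclideanSpace ℝ (Fin d),
            μ * ‖x₂ - x₁‖ ^ 2 ≤
              (inner ℝ
                (gradient (fun x => (‖x‖ ^ 2 + ε * G x)
                    + h / 4 * ‖gradient (fun y => ‖y‖ ^ 2 + ε * G y) x‖ ^ 2) x₂
                  - gradient (fun x => (‖x‖ ^ 2 + ε * G x)
                    + h / 4 * ‖gradient (fun y => ‖y‖ ^ 2 + ε * G y) x‖ ^ 2) x₁)
                (x₂ - x₁) : ℝ) := by
  obtain ⟨M₀, hM₀⟩ := hGbdd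
  set M : ℝ := max M₀ 0 with hMdef
  have hM : 0 ≤ M := le_max_right _ _
  have hb1 : ∀ x, ‖fderiv ℝ G x‖ ≤ M := fun x => by
    have e : ‖fderiv ℝ G x‖ = ‖iteratedFDeriv ℝ 1 G x‖ := by
      rw [← norm_iteratedFDeriv_fderiv, norm_iteratedFDeriv_zero]
    rw [e]; exact le_trans (hM₀ 1 le_rfl (by norm_num) x) (le_max_left _ _)
  have hb2 : ∀ x, ‖fderiv ℝ (fderiv ℝ G) x‖ ≤ M := fun x => by
    have e : ‖fderiv ℝ (fderiv ℝ G) x‖ = ‖iteratedFDeriv ℝ 2 G x‖ := by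
      rw [← norm_iteratedFDeriv_fderiv, ← norm_iteratedFDeriv_fderiv,
        norm_iteratedFDeriv_zero]
    rw [e]; exact le_trans (hM₀ 2 (by norm_num) (by norm_num) x) (le_max_left _ _)
  have hb3 : ∀ x, ‖fderiv ℝ (fderiv ℝ (fderiv ℝ G)) x‖ ≤ M := fun x => by
    have e : ‖fderiv ℝ (fderiv ℝ (fderiv ℝ G)) x‖ = ‖iteratedFDeriv ℝ 3 G x‖ := by
      rw [← norm_iteratedFDeriv_fderiv, ← norm_iteratedFDeriv_fderiv,
        ← norm_iteratedFDeriv_fderiv, norm_iteratedFDeriv_zero]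
    rw [e]; exact le_trans (hM₀ 3 (by norm_num) le_rfl x) (le_max_left _ _)
  have hG3' : ∀ x k : EuclideanSpace ℝ (Fin d),
      -cF * ‖k‖ ^ 2 ≤ fderiv ℝ (fderiv ℝ (fderiv ℝ G)) x x k k := fun x k => by
    rw [← itfd3_apply]; exact hG3 x k
  refine ⟨1 / (M + 1), by positivity, fun ε hε hεlt => ?_⟩
  have hpos : 0 < 2 * cF + ε * M ^ 2 := by nlinarith [sq_nonneg M, mul_nonneg hε.le (sq_nonneg M)]
  have hcpos : 0 < ε * (2 * cF + ε * M ^ 2) := mul_pos hε hpos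
  refine ⟨1 / (ε * (2 * cF + ε * M ^ 2) + 1), by positivity, 1 / 2, by norm_num,
    fun h hh hhlt x₁ x₂ => ?_⟩
  have hεM : ε * M ≤ 1 := by
    have := (lt_div_iff₀ (by positivity : (0:ℝ) < M + 1)).mp hεlt
    nlinarith
  have hhc : h * (ε * (2 * cF + ε * M ^ 2)) ≤ 1 := by
    have := (lt_div_iff₀ (by positivity : (0:ℝ) < ε * (2 * cF + ε * M ^ 2) + 1)).mp hhlt
    nlinarith
  exact key_ineq G cF M ε h hcF hM hG hb1 hb2 hb3 hG3' hε hεM hh hhc x₁ x₂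
end
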